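/- For integers n, l, k with 3 ≤ l ≤ n−2 and 2 ≤ k ≤ l, there exists a connected graph G on n vertices with independence number α(G) = l and conflict-free connection number cfc(G) = k. Hence the bound cfc(G) ≤ α(G) is tight. -/

import Mathlib

open SimpleGraph

/-- An edge coloring `c` makes `G` conflict-free connected: every two distinct
vertices are joined by a path containing a color used on exactly one of its edges. -/
def IsCFConnColoring {V : Type*} (G : SimpleGraph V) (c : Sym2 V → ℕ) : Prop :=
  ∀ u v : V, u ≠ v → ∃ p : G.Walk u v, p.IsPath ∧
    ∃ col : ℕ, (p.edges.filter (fun e => c e = col)).length = 1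

/-- The conflict-free connection number: the minimum number of colors in a
conflict-free connection coloring. -/
noncomputable def cfcNum {V : Type*} (G : SimpleGraph V) : ℕ :=
  sInf {k | ∃ c : Sym2 V → ℕ, (∀ e, c e < k) ∧ IsCFConnColoring G c}

/-- The independence number: the maximum size of a set of pairwise non-adjacent vertices. -/
noncomputable def indepNum {V : Type*} [Fintype V] (G : SimpleGraph V) : ℕ :=
  sSup {n | ∃ s : Finset V, (↑s : Set V).Pairwise (fun a b => ¬ G.Adj a b) ∧ s.card = n}

/-!
The witness has a hub `u` carrying `s` pendant leaves, a neighbour `v` of `u`, `t` pairwise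
non-adjacent twins joined to `u` and `v`, and a clique of `m` vertices joined to `v` and to all
twins. The only path between two leaves is leaf–`u`–leaf, so the `s` pendant edges need distinct
colours; when `t = 0` the path leaf–`u`–`v` is forced as well and `uv` needs an extra colour.
An explicit colouring in which every non-adjacent pair is joined by a path of length at most
three with a colour used once attains these bounds. The leaves together with the twins (or with
`v` when `t = 0`) are independent, and the vertices are covered by `s + max t 1` cliques.
Taking `(s, t) = (k, l - k)` when `k < l` and `(s, t) = (k - 1, 0)` when `k = l` proves the
theorem.
-/

namespace SimpleGraph

section IndepNum

variable {V W : Type*} {G : SimpleGraph V} {H : SimpleGraph W}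

lemma indepNum_eq_indepNum [Fintype V] : _root_.indepNum G = G.indepNum := by
  simp only [_root_.indepNum, indepNum, isNIndepSet_iff, IsIndepSet]

lemma Embedding.indepNum_le [Finite W] (f : G ↪g H) : G.indepNum ≤ H.indepNum := by
  obtain ⟨S, hS⟩ := G.exists_isNIndepSet_indepNum
  rw [← hS.card_eq, ← Finset.card_map f.toEmbedding]
  refine IsIndepSet.card_le_indepNum ?_
  rintro _ hx _ hy hxy
  simp only [Finset.coe_map, Set.mem_image, Finset.mem_coe] at hx hy
  obtain ⟨x, hx, rfl⟩ := hx
  obtain ⟨y, hy, rfl⟩ := hy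
  exact fun h => hS.isIndepSet hx hy (ne_of_apply_ne _ hxy) (f.map_adj_iff.1 h)

lemma Iso.indepNum_eq [Finite V] [Finite W] (f : G ≃g H) : G.indepNum = H.indepNum :=
  le_antisymm f.toEmbedding.indepNum_le f.symm.toEmbedding.indepNum_le

lemma indepNum_le_card_of_fibers_clique [Fintype W] (f : V → W)
    (hf : ∀ x y, x ≠ y → f x = f y → G.Adj x y) : G.indepNum ≤ Fintype.card W := by
  obtain ⟨S, hS⟩ := G.exists_isNIndepSet_indepNum
  rw [← hS.card_eq, ← Finset.card_univ]
  refine Finset.card_le_card_of_injOn f (fun _ _ => Finset.mem_coe.2 (Finset.mem_univ _)) ?_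
  intro x hx y hy hxy
  by_contra hne
  exact hS.isIndepSet hx hy hne (hf x y hne hxy)

lemma card_le_indepNum_of_injective [Finite V] {ι : Type*} [Fintype ι] {g : ι → V}
    (hg : Function.Injective g) (hind : ∀ i j, ¬ G.Adj (g i) (g j)) :
    Fintype.card ι ≤ G.indepNum := by
  classical
  rw [← Finset.card_univ, ← Finset.card_image_of_injective _ hg]
  refine IsIndepSet.card_le_indepNum ?_
  rintro _ hx _ hy -
  simp only [Finset.coe_image, Finset.coe_univ, Set.image_univ, Set.mem_range] at hx hy
  obtain ⟨i, rfl⟩ := hx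
  obtain ⟨j, rfl⟩ := hy
  exact hind i j

end IndepNum

lemma exists_iso_fin {V : Type*} [Fintype V] (G : SimpleGraph V) {n : ℕ}
    (hn : Fintype.card V = n) : ∃ H : SimpleGraph (Fin n), Nonempty (G ≃g H) :=
  ⟨_, ⟨Iso.map (Fintype.equivFinOfCardEq hn) G⟩⟩

section CFConnection

variable {V W : Type*} {G : SimpleGraph V} {H : SimpleGraph W} {c : Sym2 V → ℕ} {x y w : V}

def CFJoined (G : SimpleGraph V) (c : Sym2 V → ℕ) (x y : V) : Prop :=
  ∃ p : G.Walk x y, p.IsPath ∧ ∃ col : ℕ, (p.edges.filter (fun e => c e = col)).length = 1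

lemma isCFConnColoring_iff : IsCFConnColoring G c ↔ ∀ x y, x ≠ y → CFJoined G c x y :=
  Iff.rfl

lemma CFJoined.symm (h : CFJoined G c x y) : CFJoined G c y x := by
  obtain ⟨p, hp, col, hcol⟩ := h
  exact ⟨p.reverse, hp.reverse, col, by
    rwa [Walk.edges_reverse, List.filter_reverse, List.length_reverse]⟩

lemma cfJoined_of_isPath (p : G.Walk x y) (hp : p.IsPath) {e : Sym2 V} (he : e ∈ p.edges)
    (huniq : ∀ e' ∈ p.edges, c e' = c e → e' = e) : CFJoined G c x y := by
  refine ⟨p, hp, c e, le_antisymm ?_ (List.length_pos_of_mem (List.mem_filter.2 ⟨he, by simp⟩))⟩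
  have hsub : p.edges.filter (fun e' => c e' = c e) ⊆ [e] := fun e' he' => by
    rw [List.mem_filter, decide_eq_true_iff] at he'
    exact List.mem_singleton.2 (huniq e' he'.1 he'.2)
  exact ((hp.edges_nodup.filter _).subperm hsub).length_le

lemma cfJoined_of_adj (h : G.Adj x y) : CFJoined G c x y :=
  cfJoined_of_isPath (.cons h .nil) (by simp [h.ne]) (e := s(x, y)) (by simp) (by simp)

lemma cfJoined_of_adj_adj (hxw : G.Adj x w) (hwy : G.Adj w y) (hxy : x ≠ y)
    (hc : c s(x, w) ≠ c s(w, y)) : CFJoined G c x y :=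
  cfJoined_of_isPath (.cons hxw (.cons hwy .nil)) (by simp [hxw.ne, hwy.ne, hxy])
    (e := s(x, w)) (by simp) (by simp [hc.symm])

lemma cfJoined_of_adj_adj_adj {w₁ w₂ : V} (h₁ : G.Adj x w₁) (h₂ : G.Adj w₁ w₂) (h₃ : G.Adj w₂ y)
    (hxw₂ : x ≠ w₂) (hxy : x ≠ y) (hw₁y : w₁ ≠ y) {e : Sym2 V}
    (he : e ∈ [s(x, w₁), s(w₁, w₂), s(w₂, y)])
    (huniq : ∀ e' ∈ [s(x, w₁), s(w₁, w₂), s(w₂, y)], c e' = c e → e' = e) : CFJoined G c x y :=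
  cfJoined_of_isPath (.cons h₁ (.cons h₂ (.cons h₃ .nil)))
    (by simp [h₁.ne, h₂.ne, h₃.ne, hxw₂, hxy, hw₁y]) he huniq

lemma CFJoined.color_ne {e₁ e₂ : Sym2 V} (h : CFJoined G c x y)
    (hpath : ∀ p : G.Walk x y, p.IsPath → p.edges = [e₁, e₂]) : c e₁ ≠ c e₂ := by
  obtain ⟨p, hp, col, hcol⟩ := h
  rw [hpath p hp] at hcol
  intro heq
  by_cases h₁ : c e₁ = col <;> simp_all

lemma CFJoined.comap (f : G ≃g H) {c : Sym2 W → ℕ} (h : CFJoined H c (f x) (f y)) :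
    CFJoined G (c ∘ Sym2.map f) x y := by
  obtain ⟨p, hp, col, hcol⟩ := h
  refine ⟨(p.map f.symm.toHom).copy (by simp) (by simp),
    by simpa using (Walk.isPath_map_iff_of_injective f.symm.injective).2 hp, col, ?_⟩
  simpa [Walk.edges_map, List.filter_map, Function.comp_def, Sym2.map_map] using hcol

lemma IsCFConnColoring.comap (f : G ≃g H) {c : Sym2 W → ℕ} (hc : IsCFConnColoring H c) :
    IsCFConnColoring G (c ∘ Sym2.map f) :=
  fun x y hxy => CFJoined.comap f (hc (f x) (f y) (f.injective.ne hxy))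

lemma cfcNum_congr (f : G ≃g H) : cfcNum G = cfcNum H := by
  unfold cfcNum
  congr 1
  ext k
  constructor <;> rintro ⟨c, hk, hc⟩
  exacts [⟨_, fun _ => hk _, hc.comap f.symm⟩, ⟨_, fun _ => hk _, hc.comap f⟩]

lemma cfcNum_eq_of_forall_le {k : ℕ} (hc : ∀ e, c e < k) (hcf : IsCFConnColoring G c)
    (hmin : ∀ (k' : ℕ) (c' : Sym2 V → ℕ), (∀ e, c' e < k') → IsCFConnColoring G c' → k ≤ k') :
    cfcNum G = k :=
  le_antisymm (Nat.sInf_le ⟨c, hc, hcf⟩)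
    (le_csInf ⟨k, c, hc, hcf⟩ fun _ ⟨c', hk', hc'⟩ => hmin _ c' hk' hc')

end CFConnection

namespace Walk

variable {V : Type*} {G : SimpleGraph V} {x y w : V}

lemma exists_eq_cons_of_forall_adj_eq (hx : ∀ z, G.Adj x z → z = w) (p : G.Walk x y)
    (hxy : x ≠ y) : ∃ (h : G.Adj x w) (q : G.Walk w y), p = .cons h q := by
  cases p with
  | nil => exact absurd rfl hxy
  | cons h q =>
    obtain rfl := hx _ h
    exact ⟨h, q, rfl⟩

lemma IsPath.edges_eq_of_leaves (hx : ∀ z, G.Adj x z → z = w) (hy : ∀ z, G.Adj y z → z = w)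
    (hxy : x ≠ y) {p : G.Walk x y} (hp : p.IsPath) : p.edges = [s(x, w), s(w, y)] := by
  obtain ⟨hxw, q, rfl⟩ := p.exists_eq_cons_of_forall_adj_eq hx hxy
  have hyw : y ≠ w := fun hyw => hxw.ne (hy x (hyw ▸ hxw.symm))
  obtain ⟨hyw', r, hr⟩ := q.reverse.exists_eq_cons_of_forall_adj_eq hy hyw
  have hr_nil : r = .nil := eq_nil_iff_nil.2 (isPath_iff_nil.1 (hr ▸ hp.of_cons.reverse).of_cons)
  have hq : q = (Walk.cons hyw' .nil).reverse := by rw [← hr_nil, ← hr, reverse_reverse]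
  subst hq
  simp [Sym2.eq_swap]

lemma IsPath.edges_eq_of_leaf_of_forall_leaf (hx : ∀ z, G.Adj x z → z = w) (hwy : G.Adj w y)
    (hw : ∀ z, G.Adj w z → z ≠ y → ∀ z', G.Adj z z' → z' = w) (hxy : x ≠ y)
    {p : G.Walk x y} (hp : p.IsPath) : p.edges = [s(x, w), s(w, y)] := by
  obtain ⟨hxw, q, rfl⟩ := p.exists_eq_cons_of_forall_adj_eq hx hxy
  cases q with
  | nil => exact absurd rfl hwy.ne
  | cons hwz r =>
    rename_i z
    by_cases hzy : z = y
    · subst hzy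
      obtain rfl := eq_nil_iff_nil.2 (isPath_iff_nil.1 hp.of_cons.of_cons)
      rfl
    · obtain ⟨_, r', hr⟩ := r.exists_eq_cons_of_forall_adj_eq (hw z hwz hzy) hzy
      have hw_notMem : w ∉ r.support := ((cons_isPath_iff hwz r).1 hp.of_cons).2
      simp [hr] at hw_notMem

end Walk

end SimpleGraph

inductive TightVertex (s t m : ℕ) : Type
  | u
  | v
  | leaf (i : Fin s)
  | twin (j : Fin t)
  | clq (j : Fin m)
  deriving DecidableEq

namespace TightVertex

variable {s t m : ℕ}

def equivSum : TightVertex s t m ≃ Unit ⊕ Unit ⊕ Fin s ⊕ Fin t ⊕ Fin m where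
  toFun
    | u => .inl ()
    | v => .inr (.inl ())
    | leaf i => .inr (.inr (.inl i))
    | twin j => .inr (.inr (.inr (.inl j)))
    | clq j => .inr (.inr (.inr (.inr j)))
  invFun
    | .inl () => u
    | .inr (.inl ()) => v
    | .inr (.inr (.inl i)) => leaf i
    | .inr (.inr (.inr (.inl j))) => twin j
    | .inr (.inr (.inr (.inr j))) => clq j
  left_inv x := by cases x <;> rfl
  right_inv x := by rcases x with _ | _ | _ | _ | _ <;> rfl

instance : Fintype (TightVertex s t m) := Fintype.ofEquiv _ equivSum.symm

lemma card_eq : Fintype.card (TightVertex s t m) = s + t + m + 2 := by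
  simp [Fintype.card_congr equivSum]
  omega

@[simp] def IsEdge : TightVertex s t m → TightVertex s t m → Prop
  | u, v | u, leaf _ | u, twin _ | v, twin _ | v, clq _ | twin _, clq _ | clq _, clq _ => True
  | _, _ => False

end TightVertex

open TightVertex

def tightGraph (s t m : ℕ) : SimpleGraph (TightVertex s t m) := SimpleGraph.fromRel IsEdge

namespace TightVertex

variable {s t m : ℕ}

@[simp] lemma tightGraph_adj {x y : TightVertex s t m} :
    (tightGraph s t m).Adj x y ↔ x ≠ y ∧ (IsEdge x y ∨ IsEdge y x) :=
  fromRel_adj _ _ _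

lemma connected_tightGraph : (tightGraph s t m).Connected := by
  have hu : ∀ x : TightVertex s t m, (tightGraph s t m).Reachable x u := by
    rintro (_ | _ | i | j | j)
    · rfl
    iterate 3 exact Adj.reachable (by simp)
    exact (Adj.reachable (v := v) (by simp)).trans (Adj.reachable (by simp))
  exact (connected_iff _).2 ⟨fun x y => (hu x).trans (hu y).symm, ⟨u⟩⟩

lemma indepNum_tightGraph (hs : 0 < s) : (tightGraph s t m).indepNum = s + max t 1 := by
  refine le_antisymm ?_ ?_
  · let f : TightVertex s t m → Fin s ⊕ Fin (max t 1)
      | u => .inl ⟨0, hs⟩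
      | leaf i => .inl i
      | twin j => .inr ⟨j, by omega⟩
      | v | clq _ => .inr ⟨0, by omega⟩
    calc (tightGraph s t m).indepNum ≤ Fintype.card (Fin s ⊕ Fin (max t 1)) :=
          indepNum_le_card_of_fibers_clique f ?_
      _ = s + max t 1 := by simp
    rintro (_ | _ | i | i | i) (_ | _ | j | j | j) hne heq <;> simp_all [f, Fin.ext_iff]
  · rcases t.eq_zero_or_pos with rfl | ht
    · have hinj : Function.Injective fun o : Option (Fin s) => o.elim (v : TightVertex s 0 m) leaf := by
        rintro (_ | i) (_ | j) h <;> simp_all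
      simpa using card_le_indepNum_of_injective (G := tightGraph s 0 m) hinj
        (by rintro (_ | i) (_ | j) <;> simp)
    · have hinj : Function.Injective (Sum.elim leaf twin : Fin s ⊕ Fin t → TightVertex s t m) := by
        rintro (i | i) (j | j) h <;> simp_all
      rw [max_eq_left ht]
      simpa using card_le_indepNum_of_injective (G := tightGraph s t m) hinj
        (by rintro (i | i) (j | j) <;> simp)

@[simp] def color (k : ℕ) : TightVertex s t m → TightVertex s t m → ℕ
  | u, leaf i | leaf i, u => i
  | u, v | v, u => k - 1
  | v, twin _ | twin _, v | v, clq _ | clq _, v | twin _, clq _ | clq _, twin _ => 1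
  | _, _ => 0

def coloring (k : ℕ) : Sym2 (TightVertex s t m) → ℕ :=
  Sym2.lift ⟨color k, by intro a b; cases a <;> cases b <;> rfl⟩

@[simp] lemma coloring_mk (k : ℕ) (x y : TightVertex s t m) :
    coloring k s(x, y) = color k x y :=
  rfl

section Coloring

variable {k : ℕ}

lemma coloring_lt (hk : 2 ≤ k) (hs : s ≤ k) (e : Sym2 (TightVertex s t m)) :
    coloring k e < k := by
  induction e using Sym2.ind with
  | _ x y => cases x <;> cases y <;> simp <;> omega

lemma cfJoined_leaf_leaf {i j : Fin s} (hij : i ≠ j) :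
    CFJoined (tightGraph s t m) (coloring k) (leaf i) (leaf j) :=
  cfJoined_of_adj_adj (w := u) (by simp) (by simp) (by simpa using hij)
    (by simpa [Fin.val_eq_val] using hij)

lemma cfJoined_twin_twin (hk : 2 ≤ k) {i j : Fin t} (hij : i ≠ j) :
    CFJoined (tightGraph s t m) (coloring k) (twin i) (twin j) := by
  apply cfJoined_of_adj_adj_adj (w₁ := u) (w₂ := v) (e := s(twin i, u)) <;> simp [hij]
  omega

lemma cfJoined_leaf_v (hk : 2 ≤ k) (hsk : t = 0 → s < k) (i : Fin s) :
    CFJoined (tightGraph s t m) (coloring k) (leaf i) v := by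
  by_cases hi : i.val = k - 1
  · have ht : 0 < t := Nat.pos_of_ne_zero fun ht => by have := hsk ht; omega
    apply cfJoined_of_adj_adj_adj (w₁ := u) (w₂ := twin ⟨0, ht⟩) (e := s(u, twin ⟨0, ht⟩)) <;>
      simp
    omega
  · exact cfJoined_of_adj_adj (w := u) (by simp) (by simp) (by simp) (by simpa using hi)

lemma cfJoined_leaf_twin (hk : 2 ≤ k) (i : Fin s) (j : Fin t) :
    CFJoined (tightGraph s t m) (coloring k) (leaf i) (twin j) := by
  by_cases hi : i.val = 0
  · apply cfJoined_of_adj_adj_adj (w₁ := u) (w₂ := v) (e := s(leaf i, u)) <;> simp [hi]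
    omega
  · exact cfJoined_of_adj_adj (w := u) (by simp) (by simp) (by simp) (by simpa using hi)

lemma cfJoined_leaf_clq (ht : 0 < t ∨ s < k ∧ 3 ≤ k) (i : Fin s) (j : Fin m) :
    CFJoined (tightGraph s t m) (coloring k) (leaf i) (clq j) := by
  rcases ht with ht | ⟨hsk, hk⟩
  · by_cases hi : i.val = 0
    · apply cfJoined_of_adj_adj_adj (w₁ := u) (w₂ := twin ⟨0, ht⟩)
        (e := s(twin ⟨0, ht⟩, clq j)) <;> simp [hi]
    · apply cfJoined_of_adj_adj_adj (w₁ := u) (w₂ := twin ⟨0, ht⟩)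
        (e := s(u, twin ⟨0, ht⟩)) <;> simp [hi]
  · apply cfJoined_of_adj_adj_adj (w₁ := u) (w₂ := v) (e := s(u, v)) <;> simp
    omega

lemma cfJoined_u_clq (ht : 0 < t ∨ 3 ≤ k) (j : Fin m) :
    CFJoined (tightGraph s t m) (coloring k) u (clq j) := by
  rcases ht with ht | hk
  · exact cfJoined_of_adj_adj (w := twin ⟨0, ht⟩) (by simp) (by simp) (by simp) (by simp)
  · exact cfJoined_of_adj_adj (w := v) (by simp) (by simp) (by simp) (by simp; omega)

lemma isCFConnColoring_coloring (hk : 2 ≤ k) (ht : 0 < t ∨ s < k ∧ 3 ≤ k) :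
    IsCFConnColoring (tightGraph s t m) (coloring k) := by
  have hsk : t = 0 → s < k := fun h => by omega
  rw [isCFConnColoring_iff]
  rintro (_ | _ | i | i | i) (_ | _ | j | j | j) hxy
  all_goals first
    | (apply cfJoined_of_adj; simp_all; done)
    | exact cfJoined_leaf_leaf (by simpa using hxy)
    | exact cfJoined_twin_twin hk (by simpa using hxy)
    | exact cfJoined_leaf_v hk hsk i
    | exact (cfJoined_leaf_v hk hsk j).symm
    | exact cfJoined_leaf_twin hk i j
    | exact (cfJoined_leaf_twin hk j i).symm
    | exact cfJoined_leaf_clq ht i j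
    | exact (cfJoined_leaf_clq ht j i).symm
    | exact cfJoined_u_clq (by omega) j
    | exact (cfJoined_u_clq (by omega) i).symm

end Coloring

lemma leaf_adj_eq {i : Fin s} {z : TightVertex s t m} (h : (tightGraph s t m).Adj (leaf i) z) :
    z = u := by
  cases z <;> simp_all

lemma color_leaf_ne_leaf {c : Sym2 (TightVertex s t m) → ℕ}
    (hc : IsCFConnColoring (tightGraph s t m) c) {i j : Fin s} (hij : i ≠ j) :
    c s(leaf i, u) ≠ c s(leaf j, u) := by
  rw [Sym2.eq_swap (a := leaf j)]
  exact CFJoined.color_ne (hc (leaf i) (leaf j) (by simpa using hij)) fun _ hp =>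
    hp.edges_eq_of_leaves (fun _ => leaf_adj_eq) (fun _ => leaf_adj_eq) (by simpa using hij)

lemma color_leaf_ne_uv {c : Sym2 (TightVertex s 0 m) → ℕ}
    (hc : IsCFConnColoring (tightGraph s 0 m) c) (i : Fin s) : c s(leaf i, u) ≠ c s(u, v) := by
  refine CFJoined.color_ne (hc (leaf i) v (by simp)) fun _ hp =>
    hp.edges_eq_of_leaf_of_forall_leaf (fun _ => leaf_adj_eq) (by simp) ?_ (by simp)
  rintro (_ | _ | j | j | j) hz hzv _ hz' <;> simp at hz hzv
  · exact leaf_adj_eq hz'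
  · exact j.elim0

lemma le_of_isCFConnColoring {k : ℕ} {c : Sym2 (TightVertex s t m) → ℕ} (hk : ∀ e, c e < k)
    (hc : IsCFConnColoring (tightGraph s t m) c) : s ≤ k := by
  have hinj : Function.Injective fun i : Fin s => (⟨c s(leaf i, u), hk _⟩ : Fin k) := by
    intro i j hij
    by_contra hne
    exact color_leaf_ne_leaf hc hne (congrArg Fin.val hij)
  simpa using Fintype.card_le_of_injective _ hinj

lemma lt_of_isCFConnColoring {k : ℕ} {c : Sym2 (TightVertex s 0 m) → ℕ} (hk : ∀ e, c e < k)
    (hc : IsCFConnColoring (tightGraph s 0 m) c) : s < k := by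
  let f : Option (Fin s) → Fin k := fun o =>
    o.elim ⟨c s(u, v), hk _⟩ fun i => ⟨c s(leaf i, u), hk _⟩
  have hinj : Function.Injective f := by
    rintro (_ | i) (_ | j) hij <;> simp only [f, Option.elim, Fin.mk.injEq] at hij
    · rfl
    · exact absurd hij.symm (color_leaf_ne_uv hc j)
    · exact absurd hij (color_leaf_ne_uv hc i)
    · by_contra hne
      exact color_leaf_ne_leaf hc (fun h => hne (congrArg some h)) hij
  simpa using Fintype.card_le_of_injective f hinj

lemma cfcNum_tightGraph_of_pos (hs : 2 ≤ s) (ht : 0 < t) : cfcNum (tightGraph s t m) = s :=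
  cfcNum_eq_of_forall_le (coloring_lt hs le_rfl) (isCFConnColoring_coloring hs (.inl ht))
    fun _ _ => le_of_isCFConnColoring

lemma cfcNum_tightGraph_zero (hs : 2 ≤ s) : cfcNum (tightGraph s 0 m) = s + 1 :=
  cfcNum_eq_of_forall_le (coloring_lt (by omega) (by omega))
    (isCFConnColoring_coloring (by omega) (.inr ⟨by omega, by omega⟩))
    fun _ _ => lt_of_isCFConnColoring

end TightVertex

theorem stmt9 (n l k : ℕ) (hl : 3 ≤ l) (hln : l ≤ n - 2) (hk2 : 2 ≤ k) (hkl : k ≤ l) :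
    ∃ G : SimpleGraph (Fin n), G.Connected ∧ _root_.indepNum G = l ∧ cfcNum G = k := by
  obtain ⟨s, t, m, hs, hcard, hα, hcfc⟩ : ∃ s t m, 2 ≤ s ∧ s + t + m + 2 = n ∧
      s + max t 1 = l ∧ cfcNum (tightGraph s t m) = k := by
    rcases hkl.lt_or_eq with hlt | rfl
    · exact ⟨k, l - k, n - l - 2, hk2, by omega, by omega,
        cfcNum_tightGraph_of_pos hk2 (by omega)⟩
    · exact ⟨k - 1, 0, n - k - 1, by omega, by omega, by omega,
        by rw [cfcNum_tightGraph_zero (by omega)]; omega⟩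
  obtain ⟨G, ⟨φ⟩⟩ := exists_iso_fin (tightGraph s t m) (TightVertex.card_eq.trans hcard)
  refine ⟨G, φ.connected_iff.1 connected_tightGraph, ?_, ?_⟩
  · rw [indepNum_eq_indepNum, ← φ.indepNum_eq, indepNum_tightGraph (by omega), hα]
  · rw [← cfcNum_congr φ, hcfc]
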